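/- Let μ ∈ M(𝕋^d) and let Λ ⊂ ℤ^d be a finite subset. For m ∈ ℤ^d define α_m ∈ ℝ/ℤ by e^{-2πi α_m} μ̂(m) = |μ̂(m)|. If m ∈ Γ(μ,Λ), then for every minimal extrapolation ν ∈ 𝓔(μ,Λ), sign(ν)(x) = e^{2πi α_m} e^{2πi m·x} for ν-almost every x. -/

import Mathlib

/- Setting: `M(𝕋^d)`, the space of complex bounded Radon measures on the `d`-dimensional
torus, is identified with the continuous dual of `C(𝕋^d, ℂ)` via the Riesz representation
theorem; the total variation norm corresponds to the operator norm. -/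

open MeasureTheory Complex Real

noncomputable section

attribute [local instance] ZeroLEOneClass.factZeroLtOne

/-- The `d`-dimensional torus `𝕋^d = (ℝ/ℤ)^d`. -/
abbrev Torus (d : ℕ) : Type := Fin d → AddCircle (1 : ℝ)

/-- The character `x ↦ e^{2πi m·x}` on the torus, for `m ∈ ℤ^d`. -/
def torusChar {d : ℕ} (m : Fin d → ℤ) : C(Torus d, ℂ) :=
  ⟨fun x => ∏ i, fourier (m i) (x i), by
    refine continuous_finset_prod _ fun i _ => ?_
    exact (map_continuous (fourier (m i))).comp (continuous_apply i)⟩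

/-- The space `M(𝕋^d)` of complex bounded Radon measures on the torus, identified (via the
Riesz representation theorem) with the continuous dual of `C(𝕋^d, ℂ)`; the total variation
norm is the operator norm. -/
abbrev TorusMeasure (d : ℕ) : Type := C(Torus d, ℂ) →L[ℂ] ℂ

/-- The Fourier coefficient `μ̂(m) = ∫_{𝕋^d} e^{-2πi m·x} dμ(x)`. -/
def mFourierCoeff {d : ℕ} (μ : TorusMeasure d) (m : Fin d → ℤ) : ℂ :=
  μ (torusChar (-m))

/-- `ν` is an extrapolation of `μ` from `Λ` if `ν̂ = μ̂` on `Λ`. -/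
def IsExtrapolation {d : ℕ} (μ : TorusMeasure d) (Λ : Finset (Fin d → ℤ))
    (ν : TorusMeasure d) : Prop :=
  ∀ m ∈ Λ, mFourierCoeff ν m = mFourierCoeff μ m

/-- `ε(μ,Λ) = inf {‖σ‖ : σ ∈ M(𝕋^d), σ̂ = μ̂ on Λ}`. -/
def minExtNorm {d : ℕ} (μ : TorusMeasure d) (Λ : Finset (Fin d → ℤ)) : ℝ :=
  sInf ((fun ν => ‖ν‖) '' {ν | IsExtrapolation μ Λ ν})

/-- `ν` is a minimal extrapolation of `μ` from `Λ`, i.e. `ν ∈ 𝓔(μ,Λ)`: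
an extrapolation whose total variation norm equals `ε(μ,Λ)`. -/
def IsMinimalExtrapolation {d : ℕ} (μ : TorusMeasure d) (Λ : Finset (Fin d → ℤ))
    (ν : TorusMeasure d) : Prop :=
  IsExtrapolation μ Λ ν ∧ ‖ν‖ = minExtNorm μ Λ

/-- `Γ(μ,Λ) = {m ∈ Λ : |μ̂(m)| = ε(μ,Λ)}`. -/
def gammaSet {d : ℕ} (μ : TorusMeasure d) (Λ : Finset (Fin d → ℤ)) : Set (Fin d → ℤ) :=
  {m | m ∈ Λ ∧ ‖mFourierCoeff μ m‖ = minExtNorm μ Λ}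

/-- The measure `ν` is supported in the set `S`: it annihilates every continuous
function vanishing on `S` (for closed `S` this says `supp(ν) ⊆ S`). -/
def SupportedIn {d : ℕ} (ν : TorusMeasure d) (S : Set (Torus d)) : Prop :=
  ∀ f : C(Torus d, ℂ), (∀ x ∈ S, f x = 0) → ν f = 0

/-- The pairing `⟨f,μ⟩ = ∫_{𝕋^d} f(x) conj(dμ(x)) = conj (μ (conj f))`. -/
def mPairing {d : ℕ} (f : C(Torus d, ℂ)) (μ : TorusMeasure d) : ℂ :=
  starRingEnd ℂ (μ (star f))

/-- `C(𝕋^d;Λ)`: the subspace of trigonometric polynomials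
`f(x) = ∑_{m ∈ Λ} a_m e^{2πi m·x}` with frequencies in `Λ`. -/
def trigPoly {d : ℕ} (Λ : Finset (Fin d → ℤ)) : Submodule ℂ C(Torus d, ℂ) :=
  Submodule.span ℂ (torusChar '' (Λ : Set (Fin d → ℤ)))

/-- For a continuous `g` with `‖g‖_∞ ≤ 1`, the assertion that `sign(ν) = g`
`ν`-almost everywhere, expressed through the standard equivalent condition
`⟨g,ν⟩ = ‖ν‖` (obtained by integrating the Radon–Nikodym identity
`∫ f d|ν| = ∫ f conj(sign ν) dν` against `f = conj g` and using `|ν|(𝕋^d) = ‖ν‖`). -/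
def SignEqAE {d : ℕ} (ν : TorusMeasure d) (g : C(Torus d, ℂ)) : Prop :=
  mPairing g ν = (‖ν‖ : ℂ)

/-- `ν` is a positive measure: it takes nonnegative real values on nonnegative real-valued
continuous functions. -/
def IsPositiveMeasure {d : ℕ} (ν : TorusMeasure d) : Prop :=
  ∀ f : C(Torus d, ℂ), (∀ x, (f x).im = 0 ∧ 0 ≤ (f x).re) → (ν f).im = 0 ∧ 0 ≤ (ν f).re

/-- The Dirac measure `δ_x`: evaluation at `x`. -/
def diracM {d : ℕ} (x : Torus d) : TorusMeasure d :=
  ContinuousMap.evalCLM ℂ x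

/-- The modulation `M_n ν`, defined by `d(M_n ν)(x) = e^{2πi n·x} dν(x)`. -/
def modulateM {d : ℕ} (n : Fin d → ℤ) (ν : TorusMeasure d) : TorusMeasure d :=
  ν.comp (ContinuousLinearMap.mul ℂ C(Torus d, ℂ) (torusChar n))

open ComplexConjugate

lemma star_torusChar {d : ℕ} (m : Fin d → ℤ) : star (torusChar m) = torusChar (-m) := by
  ext x
  simp only [ContinuousMap.star_apply, torusChar, ContinuousMap.coe_mk, star_prod, Pi.neg_apply,
    fourier_neg]
  rfl

lemma mPairing_smul_torusChar {d : ℕ} (ν : TorusMeasure d) (c : ℂ) (m : Fin d → ℤ) :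
    mPairing (c • torusChar m) ν = c * conj (mFourierCoeff ν m) := by
  rw [mPairing, star_smul, star_torusChar, map_smul, smul_eq_mul, map_mul, mFourierCoeff]
  simp

lemma conj_exp_neg_two_pi_I_mul (α : ℝ) :
    conj (Complex.exp (-(2 * (π : ℂ) * Complex.I * (α : ℂ)))) =
      Complex.exp (2 * (π : ℂ) * Complex.I * (α : ℂ)) := by
  rw [← Complex.exp_conj]
  congr 1
  simp only [map_neg, map_mul, map_ofNat, Complex.conj_ofReal, Complex.conj_I]
  ring

/-- **Proposition 2.2(b).** For `m ∈ ℤ^d` define `α_m ∈ ℝ/ℤ` by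
`e^{-2πi α_m} μ̂(m) = |μ̂(m)|`. If `m ∈ Γ(μ,Λ)`, then for every minimal extrapolation `ν`,
`sign(ν)(x) = e^{2πi α_m} e^{2πi m·x}` for `ν`-almost every `x`. -/
theorem sign_eq_modulated_character_of_mem_gamma {d : ℕ} (μ : TorusMeasure d)
    (Λ : Finset (Fin d → ℤ)) (m : Fin d → ℤ) (hm : m ∈ gammaSet μ Λ) (α : ℝ)
    (hα : Complex.exp (-(2 * (π : ℂ) * Complex.I * (α : ℂ))) * mFourierCoeff μ m =
      (‖mFourierCoeff μ m‖ : ℂ)) :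
    ∀ ν : TorusMeasure d, IsMinimalExtrapolation μ Λ ν →
      SignEqAE ν (Complex.exp (2 * (π : ℂ) * Complex.I * (α : ℂ)) • torusChar m) := by
  rintro ν ⟨hext, hnorm⟩
  obtain ⟨hmΛ, hmε⟩ := hm
  calc mPairing (Complex.exp (2 * (π : ℂ) * Complex.I * (α : ℂ)) • torusChar m) ν
      = conj (Complex.exp (-(2 * (π : ℂ) * Complex.I * (α : ℂ))) * mFourierCoeff μ m) := by
        rw [mPairing_smul_torusChar, hext m hmΛ, map_mul, conj_exp_neg_two_pi_I_mul]
    _ = ‖ν‖ := by rw [hα, Complex.conj_ofReal, hmε, hnorm]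

end
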